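/- arXiv:2306.16937 — 3 statements merged into one kernel-verified Lean document; each statement's English description precedes it below -/
import Mathlib

section
/- In a vector-valued finite-horizon MDP with horizon N = 3, property (P) holds: F_2(s) ⊆ V_2(s) and F_1(s) ⊆ V_1(s) for every state s, where F_t(s) = ⋃_{a ∈ A_s}({R_t(s,a)} ⊕ ∑_j p_t(j|s,a) U_{t+1}(j)), U_3(s) = {R_3(s)}, U_t(s) = e(F_t(s)), and V_t(s) is the set of expected total rewards from (t, s) of Markovian policies. -/
/-- Pareto efficient subset of `X ⊆ ℝ^m`. -/
def eff {m : ℕ} (X : Set (Fin m → ℝ)) : Set (Fin m → ℝ) :=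
  {x ∈ X | ∀ y ∈ X, x ≤ y → y = x}

/-!
A point of `F₂(s)` is the value at `s` of any decision rule taking the corresponding action at
`s`. A point of `F₁(s)` is `R₁(s,a) + ∑ⱼ p₁(j|s,a) w(j)` with each `w(j)` in `e(F₂(j)) ⊆ F₂(j)`,
hence the value at `j` of some action `bⱼ`; since the time-2 decision rule may differ from state
to state, `j ↦ bⱼ` is a single decision rule realizing all the `w(j)` at once.
-/

theorem Set.exists_forall_mem_and_apply_eq {ι α : Type*} {t : ι → Set α}
    (ht : ∀ i, (t i).Nonempty) {i : ι} {a : α} (ha : a ∈ t i) :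
    ∃ f : ι → α, (∀ j, f j ∈ t j) ∧ f i = a := by
  classical
  have hsome : (fun j => (ht j).some) ∈ Set.univ.pi t := fun j _ => (ht j).some_mem
  refine ⟨Function.update (fun j => (ht j).some) i a, fun j => ?_, Function.update_self ..⟩
  exact (Set.update_mem_pi_iff_of_mem hsome).2 (fun _ => ha) j (Set.mem_univ j)

/-- Property (P) for horizon `N = 3`: `F_2(s) ⊆ V_2(s)` and `F_1(s) ⊆ V_1(s)` for every
state `s`, where the `F_t` come from White's recursion and the `V_t` are sets of Markovian
policy values. -/
theorem P_holds_N3 {S A : Type*} [Fintype S] (m : ℕ)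
    (Asets : S → Set A) (hAne : ∀ s, (Asets s).Nonempty)
    (R1 R2 : S → A → (Fin m → ℝ)) (R3 : S → Fin m → ℝ)
    (p1 p2 : S → A → S → ℝ)
    (F2 : S → Set (Fin m → ℝ))
    (hF2 : ∀ s, F2 s = ⋃ a ∈ Asets s, {v | v = R2 s a + ∑ j, p2 s a j • R3 j})
    (U2 : S → Set (Fin m → ℝ)) (hU2 : ∀ s, U2 s = eff (F2 s))
    (F1 : S → Set (Fin m → ℝ))
    (hF1 : ∀ s, F1 s = ⋃ a ∈ Asets s, {v | ∃ w : S → (Fin m → ℝ),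
      (∀ j, w j ∈ U2 j) ∧ v = R1 s a + ∑ j, p1 s a j • w j})
    (u2 : (S → A) → S → (Fin m → ℝ))
    (hu2 : ∀ d2 s, u2 d2 s = R2 s (d2 s) + ∑ j, p2 s (d2 s) j • R3 j)
    (u1 : (S → A) → (S → A) → S → (Fin m → ℝ))
    (hu1 : ∀ d1 d2 s, u1 d1 d2 s = R1 s (d1 s) + ∑ j, p1 s (d1 s) j • u2 d2 j)
    (V2 : S → Set (Fin m → ℝ))
    (hV2 : ∀ s, V2 s = {v | ∃ d2 : S → A, (∀ s', d2 s' ∈ Asets s') ∧ v = u2 d2 s})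
    (V1 : S → Set (Fin m → ℝ))
    (hV1 : ∀ s, V1 s = {v | ∃ d1 d2 : S → A, (∀ s', d1 s' ∈ Asets s') ∧
      (∀ s', d2 s' ∈ Asets s') ∧ v = u1 d1 d2 s}) :
    ∀ s, F2 s ⊆ V2 s ∧ F1 s ⊆ V1 s := by
  have mem_F2 : ∀ s v, v ∈ F2 s ↔ ∃ a ∈ Asets s, v = R2 s a + ∑ j, p2 s a j • R3 j := by
    simp [hF2]
  intro s
  constructor
  · intro v hv
    obtain ⟨a, ha, rfl⟩ := (mem_F2 s v).1 hv
    obtain ⟨d2, hd2, rfl⟩ := Set.exists_forall_mem_and_apply_eq hAne ha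
    rw [hV2]
    exact ⟨d2, hd2, (hu2 d2 s).symm⟩
  · intro v hv
    simp only [hF1, Set.mem_iUnion, Set.mem_ofPred_eq, exists_prop] at hv
    obtain ⟨a, ha, w, hw, rfl⟩ := hv
    have hwF2 (j : S) : w j ∈ F2 j := (hU2 j ▸ hw j).1
    choose d2 hd2 hw2 using fun j => (mem_F2 j (w j)).1 (hwF2 j)
    obtain ⟨d1, hd1, rfl⟩ := Set.exists_forall_mem_and_apply_eq hAne ha
    rw [hV1]
    refine ⟨d1, d2, hd1, hd2, ?_⟩
    simp only [hu1, hu2, hw2]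
end

section
/- Consider a deterministic vector-valued finite-horizon MDP: for each s ∈ S, a ∈ A_s and t < N there exists a unique s⁺ ∈ S with p_t(s⁺|s,a) = 1. Then property (P) holds: F_t(s) ⊆ V_t(s) for all s ∈ S and t < N, where F_t(s) = ⋃_{a ∈ A_s}({R_t(s,a)} ⊕ U_{t+1}(next(s,a,t))) with U_N(s) = {R_N(s)}, U_t(s) = e(F_t(s)), and V_t(s) the set of total rewards of Markovian policies from (t, s). -/
/-!
Backward induction on `t`: every point of `U t s` is the value of some admissible Markovian
policy. At `t = N` any admissible policy works. For `t < N`, a point of `F t s` has the form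
`R t s a + w` with `w = val π (t+1) (next s a t)`; overriding `π` by `a` at the single pair
`(t, s)` realises it, because by determinism the value from `(t+1, ·)` only sees actions at
times `≥ t + 1`. Finally `U t s ⊆ F t s`, since `U t s` is the efficient part of `F t s`.
-/

namespace DeterministicMDP

variable {S A M : Type*} {N : ℕ} {Asets : S → Set A}
  {R : ℕ → S → A → M} {RN : S → M} {next : S → A → ℕ → S}
  {val : (ℕ → S → A) → ℕ → S → M}

def policyValues (Asets : S → Set A) (val : (ℕ → S → A) → ℕ → S → M) (t : ℕ) (s : S) :
    Set M :=
  {v | ∃ π : ℕ → S → A, (∀ t' s', π t' s' ∈ Asets s') ∧ v = val π t s}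

theorem val_eq_of_agree_from [Add M] (hvalN : ∀ π s, val π N s = RN s)
    (hval : ∀ π, ∀ t < N, ∀ s, val π t s = R t s (π t s) + val π (t+1) (next s (π t s) t))
    {π π' : ℕ → S → A} {t : ℕ} (ht : t ≤ N) (hagree : ∀ u, t ≤ u → π u = π' u) (s : S) :
    val π t s = val π' t s := by
  induction ht using Nat.decreasingInduction generalizing s with
  | self => rw [hvalN, hvalN]
  | of_succ t ht ih =>
    rw [hval π t ht, hval π' t ht, hagree t le_rfl,
      ih (fun u hu => hagree u (Nat.le_of_succ_le hu))]

theorem val_update_eq [Add M] (hvalN : ∀ π s, val π N s = RN s)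
    (hval : ∀ π, ∀ t < N, ∀ s, val π t s = R t s (π t s) + val π (t+1) (next s (π t s) t))
    [DecidableEq S] (π : ℕ → S → A) {t : ℕ} (ht : t < N) (s : S) (a : A) :
    val (Function.update π t (Function.update (π t) s a)) t s =
      R t s a + val π (t+1) (next s a t) := by
  have hlater : ∀ u, t + 1 ≤ u → Function.update π t (Function.update (π t) s a) u = π u :=
    fun u hu => Function.update_of_ne (by omega) _ _
  rw [hval _ t ht, val_eq_of_agree_from hvalN hval ht hlater]
  simp

theorem mem_policyValues_terminal (hvalN : ∀ π s, val π N s = RN s)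
    (hAne : ∀ s, (Asets s).Nonempty) (s : S) :
    RN s ∈ policyValues Asets val N s :=
  ⟨fun _ s => (hAne s).choose, fun _ s => (hAne s).choose_spec, (hvalN _ s).symm⟩

theorem subset_policyValues_of_succ [Add M] (hvalN : ∀ π s, val π N s = RN s)
    (hval : ∀ π, ∀ t < N, ∀ s, val π t s = R t s (π t s) + val π (t+1) (next s (π t s) t))
    {U : ℕ → S → Set M} {X : Set M} {t : ℕ} (ht : t < N) {s : S}
    (hX : X = ⋃ a ∈ Asets s, {v | ∃ w ∈ U (t+1) (next s a t), v = R t s a + w})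
    (hsucc : ∀ s', U (t+1) s' ⊆ policyValues Asets val (t+1) s') :
    X ⊆ policyValues Asets val t s := by
  classical
  intro v hv
  rw [hX] at hv
  simp only [Set.mem_iUnion, Set.mem_ofPred_eq] at hv
  obtain ⟨a, ha, w, hw, rfl⟩ := hv
  obtain ⟨π, hπ, rfl⟩ := hsucc _ hw
  refine ⟨Function.update π t (Function.update (π t) s a), fun t' s' => ?_,
    (val_update_eq hvalN hval π ht s a).symm⟩
  rcases eq_or_ne t' t with rfl | ht'
  · rcases eq_or_ne s' s with rfl | hs'
    · simpa using ha
    · simpa [hs'] using hπ t' s'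
  · simpa [ht'] using hπ t' s'

theorem subset_policyValues [Add M] (hAne : ∀ s, (Asets s).Nonempty)
    (hvalN : ∀ π s, val π N s = RN s)
    (hval : ∀ π, ∀ t < N, ∀ s, val π t s = R t s (π t s) + val π (t+1) (next s (π t s) t))
    {U F : ℕ → S → Set M} (hUN : ∀ s, U N s = {RN s})
    (hF : ∀ t < N, ∀ s, F t s =
      ⋃ a ∈ Asets s, {v | ∃ w ∈ U (t+1) (next s a t), v = R t s a + w})
    (hUF : ∀ t < N, ∀ s, U t s ⊆ F t s) {t : ℕ} (ht : t ≤ N) (s : S) :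
    U t s ⊆ policyValues Asets val t s := by
  induction ht using Nat.decreasingInduction generalizing s with
  | self =>
    rw [hUN, Set.singleton_subset_iff]
    exact mem_policyValues_terminal hvalN hAne s
  | of_succ t ht ih =>
    exact (hUF t ht s).trans (subset_policyValues_of_succ hvalN hval ht (hF t ht s) ih)

end DeterministicMDP

open DeterministicMDP in
theorem P_holds_deterministic_general {S A : Type*} (m N : ℕ)
    (Asets : S → Set A) (hAne : ∀ s, (Asets s).Nonempty)
    (R : ℕ → S → A → (Fin m → ℝ)) (RN : S → Fin m → ℝ)
    (next : S → A → ℕ → S)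
    (U F : ℕ → S → Set (Fin m → ℝ))
    (hUN : ∀ s, U N s = {RN s})
    (hF : ∀ t < N, ∀ s, F t s =
      ⋃ a ∈ Asets s, {v | ∃ w ∈ U (t+1) (next s a t), v = R t s a + w})
    (hU : ∀ t < N, ∀ s, U t s = eff (F t s))
    (val : (ℕ → S → A) → ℕ → S → (Fin m → ℝ))
    (hvalN : ∀ π s, val π N s = RN s)
    (hval : ∀ π, ∀ t < N, ∀ s,
      val π t s = R t s (π t s) + val π (t+1) (next s (π t s) t))
    (V : ℕ → S → Set (Fin m → ℝ))
    (hV : ∀ t s, V t s =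
      {v | ∃ π : ℕ → S → A, (∀ t' s', π t' s' ∈ Asets s') ∧ v = val π t s}) :
    ∀ s, ∀ t < N, F t s ⊆ V t s := by
  obtain rfl : V = policyValues Asets val := funext₂ hV
  have hUF : ∀ t < N, ∀ s, U t s ⊆ F t s := fun t ht s => (hU t ht s).symm ▸ Set.sep_subset _ _
  intro s t ht
  exact subset_policyValues_of_succ hvalN hval ht (hF t ht s)
    (subset_policyValues hAne hvalN hval hUN hF hUF ht)

/-- In a deterministic vector-valued finite-horizon MDP (each state-action pair has a
unique successor), property (P) holds: `F t s ⊆ V t s` for all states `s` and `t < N`. -/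
theorem P_holds_deterministic {S A : Type*} (m N : ℕ)
    (Asets : S → Set A) (hAne : ∀ s, (Asets s).Nonempty)
    (R : ℕ → S → A → (Fin m → ℝ)) (RN : S → Fin m → ℝ)
    (p : ℕ → S → A → S → ℝ) (next : S → A → ℕ → S)
    (hdet : ∀ t < N, ∀ s a, p t s a (next s a t) = 1 ∧
      ∀ j, j ≠ next s a t → p t s a j = 0)
    (U F : ℕ → S → Set (Fin m → ℝ))
    (hUN : ∀ s, U N s = {RN s})
    (hF : ∀ t < N, ∀ s, F t s =
      ⋃ a ∈ Asets s, {v | ∃ w ∈ U (t+1) (next s a t), v = R t s a + w})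
    (hU : ∀ t < N, ∀ s, U t s = eff (F t s))
    (val : (ℕ → S → A) → ℕ → S → (Fin m → ℝ))
    (hvalN : ∀ π s, val π N s = RN s)
    (hval : ∀ π, ∀ t < N, ∀ s,
      val π t s = R t s (π t s) + val π (t+1) (next s (π t s) t))
    (V : ℕ → S → Set (Fin m → ℝ))
    (hV : ∀ t s, V t s =
      {v | ∃ π : ℕ → S → A, (∀ t' s', π t' s' ∈ Asets s') ∧ v = val π t s}) :
    ∀ s, ∀ t < N, F t s ⊆ V t s :=
  P_holds_deterministic_general m N Asets hAne R RN next U F hUN hF hU val hvalN hval V hV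
end

section
/- Define U'_N(h_N) = {R_N(s_N)} for h_N = (s_1,...,s_N), and U'_t(h_t) = e(⋃_{a ∈ A_{s_t}}({R_t(s_t,a)} ⊕ ∑_j p_t(j|s_t,a) U'_{t+1}(h_t,j))) for t < N. Then U'_t(h_t) depends on h_t only through its last coordinate s_t; that is, U'_t(h_t) = U_t(s_t), where U_t is defined by White's state-indexed recursion U_N(s) = {R_N(s)}, U_t(s) = e(⋃_{a ∈ A_s}({R_t(s,a)} ⊕ ∑_j p_t(j|s,a) U_{t+1}(j))). -/
/-- Histories are lists with the most recent state first, so `(h_t, j)` is `j :: h_t`. -/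
theorem history_recursion_eq_state_recursion {S A : Type*} [Fintype S] (m N : ℕ)
    (Asets : S → Set A)
    (R : ℕ → S → A → (Fin m → ℝ)) (RN : S → Fin m → ℝ) (p : ℕ → S → A → S → ℝ)
    (U : ℕ → S → Set (Fin m → ℝ))
    (hUN : ∀ s, U N s = {RN s})
    (hU : ∀ t < N, ∀ s, U t s = eff (⋃ a ∈ Asets s,
      {v | ∃ w : S → (Fin m → ℝ), (∀ j, w j ∈ U (t+1) j) ∧
        v = R t s a + ∑ j, p t s a j • w j}))
    (U' : ℕ → List S → Set (Fin m → ℝ))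
    (hU'N : ∀ (s : S) (h : List S), U' N (s :: h) = {RN s})
    (hU' : ∀ t < N, ∀ (s : S) (h : List S), U' t (s :: h) = eff (⋃ a ∈ Asets s,
      {v | ∃ w : S → (Fin m → ℝ), (∀ j, w j ∈ U' (t+1) (j :: s :: h)) ∧
        v = R t s a + ∑ j, p t s a j • w j})) :
    ∀ t ≤ N, ∀ (s : S) (h : List S), U' t (s :: h) = U t s := by
  intro t ht
  induction ht using Nat.decreasingInduction with
  | self => intro s h; rw [hU'N, hUN]
  | of_succ t ht ih =>
    intro s h
    rw [hU' t ht, hU t ht]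
    simp only [ih]
end
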